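/- Let V be a finite-dimensional real vector space and let R be a finite set of nonzero vectors in V. If the finest independent decomposition of R has exactly p blocks, then the number of independent decompositions of R equals the number of partitions of a set with p elements (the Bell number B_p). -/

import Mathlib

/-- A decomposition of a finite set `R` of vectors: a collection of nonempty,
pairwise disjoint subsets of `R` whose union is `R`. -/
def IsDecompositionOf {V : Type*} [DecidableEq V] (R : Finset V)
    (D : Finset (Finset V)) : Prop :=
  (∀ P ∈ D, P.Nonempty) ∧ (D : Set (Finset V)).PairwiseDisjoint id ∧ D.sup id = R

/-- A decomposition is independent if the span of `R` is the internal direct sum of the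
spans of the blocks. -/
def IsIndependentDecompositionOf {V : Type*} [DecidableEq V] [AddCommGroup V] [Module ℝ V]
    (R : Finset V) (D : Finset (Finset V)) : Prop :=
  IsDecompositionOf R D ∧
    iSupIndep (fun P : {P // P ∈ D} => Submodule.span ℝ ((P : Finset V) : Set V)) ∧
    (⨆ P : {P // P ∈ D}, Submodule.span ℝ ((P : Finset V) : Set V)) =
      Submodule.span ℝ (R : Set V)

/-- `D` is a refinement of `P` (`P` a coarsening of `D`) if every block of `D` is contained
in some block of `P`. -/
def IsRefinementOf {V : Type*} (D P : Finset (Finset V)) : Prop :=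
  ∀ Q ∈ D, ∃ B ∈ P, Q ⊆ B

/-- A partition of the finite type `Fin p`: a collection of nonempty pairwise disjoint
subsets whose union is everything. -/
def IsPartitionOfFin (p : ℕ) (Q : Finset (Finset (Fin p))) : Prop :=
  (∀ B ∈ Q, B.Nonempty) ∧ (Q : Set (Finset (Fin p))).PairwiseDisjoint id ∧
    Q.sup id = Finset.univ

/-!
Two independent decompositions have an independent common refinement: the lattice of subspaces
is modular, so the blockwise intersections of two independent families stay independent. Hence
the finest independent decomposition `F` refines every independent decomposition. Conversely,
merging blocks of an independent decomposition keeps it independent. So the independent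
decompositions are exactly the coarsenings of `F`, and these correspond bijectively to the
partitions of the set of blocks of `F`.
-/

open Finset

namespace Finpartition

variable {α : Type*} [DecidableEq α] {s : Finset α}

def ofIsDecompositionOf {D : Finset (Finset α)} (h : IsDecompositionOf s D) :
    Finpartition s where
  parts := D
  supIndep := supIndep_iff_pairwiseDisjoint.2 h.2.1
  sup_parts := h.2.2
  bot_notMem h0 := not_nonempty_empty (h.1 ∅ h0)

theorem isDecompositionOf_parts (P : Finpartition s) : IsDecompositionOf s P.parts :=
  ⟨fun _ => P.nonempty_of_mem_parts, P.disjoint, P.sup_parts⟩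

theorem supIndep_inf {β : Type*} [Lattice β] [IsModularLattice β] [OrderBot β]
    {f : Finset α → β} (hf : Monotone f) {P Q : Finpartition s}
    (hP : P.parts.SupIndep f) (hQ : Q.parts.SupIndep f) : (P ⊓ Q).parts.SupIndep f := by
  rw [parts_inf]
  refine (SupIndep.image ?_).subset (erase_subset _ _)
  exact SupIndep.product (hP.mono fun b _ => Finset.sup_le fun c _ => hf inf_le_left)
    (hQ.mono fun c _ => Finset.sup_le fun b _ => hf inf_le_right)

end Finpartition

namespace IsDecompositionOf

variable {α : Type*} [DecidableEq α] {s : Finset α} {D F : Finset (Finset α)}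

theorem subset_of_mem (hD : IsDecompositionOf s D) {Q : Finset α} (hQ : Q ∈ D) : Q ⊆ s :=
  hD.2.2 ▸ le_sup (f := id) hQ

theorem exists_mem (hD : IsDecompositionOf s D) {v : α} (hv : v ∈ s) : ∃ Q ∈ D, v ∈ Q :=
  (Finpartition.ofIsDecompositionOf hD).exists_mem hv

theorem eq_of_mem_of_mem (hD : IsDecompositionOf s D) {Q Q' : Finset α} {v : α}
    (hQ : Q ∈ D) (hQ' : Q' ∈ D) (hv : v ∈ Q) (hv' : v ∈ Q') : Q = Q' :=
  (Finpartition.ofIsDecompositionOf hD).eq_of_mem_parts hQ hQ' hv hv'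

theorem sup_filter_subset_eq (hF : IsDecompositionOf s F) (hD : IsDecompositionOf s D)
    (hFD : IsRefinementOf F D) {Q : Finset α} (hQ : Q ∈ D) : (F.filter (· ⊆ Q)).sup id = Q := by
  refine le_antisymm (Finset.sup_le fun c hc => (mem_filter.1 hc).2) fun v hv => ?_
  obtain ⟨c, hc, hvc⟩ := hF.exists_mem (hD.subset_of_mem hQ hv)
  obtain ⟨Q', hQ', hcQ'⟩ := hFD c hc
  obtain rfl := hD.eq_of_mem_of_mem hQ hQ' hv (hcQ' hvc)
  exact mem_sup.2 ⟨c, mem_filter.2 ⟨hc, hcQ'⟩, hvc⟩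

end IsDecompositionOf

theorem Submodule.span_coe_finset_sup {K M ι : Type*} [Semiring K] [AddCommMonoid M]
    [Module K M] [DecidableEq M] (s : Finset ι) (f : ι → Finset M) :
    span K ((s.sup f : Finset M) : Set M) = s.sup fun i => span K (f i : Set M) := by
  rw [sup_eq_biUnion, coe_biUnion, span_iUnion₂, Finset.sup_eq_iSup]
  rfl

section Independence

open Submodule

variable {V : Type*} [DecidableEq V] [AddCommGroup V] [Module ℝ V] {R : Finset V}
  {D F : Finset (Finset V)}

theorem isIndependentDecompositionOf_iff :
    IsIndependentDecompositionOf R D ↔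
      IsDecompositionOf R D ∧ D.SupIndep fun P => span ℝ (P : Set V) := by
  refine ⟨fun ⟨hD, hind, _⟩ => ⟨hD, iSupIndep_comp_coe_iff_supIndep.1 hind⟩,
    fun ⟨hD, hind⟩ => ⟨hD, iSupIndep_comp_coe_iff_supIndep.2 hind, ?_⟩⟩
  have hsup : (⨆ P : {P // P ∈ D}, span ℝ ((P : Finset V) : Set V)) =
      D.sup fun P => span ℝ (P : Set V) := by
    rw [Finset.sup_eq_iSup, iSup_subtype]
  rw [hsup, ← hD.2.2, span_coe_finset_sup]
  rfl

theorem IsIndependentDecompositionOf.of_isRefinementOf (hF : IsIndependentDecompositionOf R F)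
    (hD : IsDecompositionOf R D) (hFD : IsRefinementOf F D) :
    IsIndependentDecompositionOf R D := by
  obtain ⟨hFdec, hFind⟩ := isIndependentDecompositionOf_iff.1 hF
  have hspan (Q : Finset V) (hQ : Q ∈ D) :
      span ℝ (Q : Set V) = (F.filter (· ⊆ Q)).sup fun c => span ℝ (c : Set V) := by
    conv_lhs => rw [← hFdec.sup_filter_subset_eq hD hFD hQ]
    exact span_coe_finset_sup _ id
  refine isIndependentDecompositionOf_iff.2 ⟨hD, fun t ht Q hQ hQt => ?_⟩
  dsimp only
  rw [hspan Q hQ, Finset.sup_congr rfl fun Q' hQ' => hspan Q' (ht hQ'), ← Finset.sup_biUnion]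
  refine hFind.disjoint_sup_sup (filter_subset _ _)
    (biUnion_subset.2 fun _ _ => filter_subset _ _) ?_
  refine (disjoint_biUnion_right _ _ _).2 fun Q' hQ' => disjoint_filter.2 fun c hc hcQ hcQ' => ?_
  obtain ⟨v, hv⟩ := hFdec.1 c hc
  exact hQt (hD.eq_of_mem_of_mem hQ (ht hQ') (hcQ hv) (hcQ' hv) ▸ hQ')

theorem IsIndependentDecompositionOf.isRefinementOf_of_minimal
    (hF : IsIndependentDecompositionOf R F)
    (hmin : ∀ E, IsIndependentDecompositionOf R E → IsRefinementOf E F → E = F)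
    (hD : IsIndependentDecompositionOf R D) : IsRefinementOf F D := by
  let P := Finpartition.ofIsDecompositionOf hD.1
  let Q := Finpartition.ofIsDecompositionOf hF.1
  have hPQ : IsIndependentDecompositionOf R (P ⊓ Q).parts :=
    isIndependentDecompositionOf_iff.2 ⟨(P ⊓ Q).isDecompositionOf_parts,
      Finpartition.supIndep_inf (fun _ _ h => span_mono (coe_subset.2 h))
        (isIndependentDecompositionOf_iff.1 hD).2 (isIndependentDecompositionOf_iff.1 hF).2⟩
  rw [← hmin _ hPQ (inf_le_right : P ⊓ Q ≤ Q)]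
  exact (inf_le_left : P ⊓ Q ≤ P)

end Independence

section Coarsening

open Function

variable {α ι : Type*} [DecidableEq α] {B : ι → Finset α}

theorem subset_sup_iff_mem (hne : ∀ i, (B i).Nonempty) (hdisj : Pairwise (Disjoint on B))
    {c : Finset ι} {i : ι} : B i ⊆ c.sup B ↔ i ∈ c := by
  refine ⟨fun h => ?_, fun hi => le_sup (f := B) hi⟩
  obtain ⟨v, hv⟩ := hne i
  obtain ⟨j, hj, hvj⟩ := mem_sup.1 (h hv)
  rwa [show i = j from by_contra fun hij => disjoint_left.1 (hdisj hij) hv hvj]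

variable [Fintype ι]

theorem isDecompositionOf_image_univ (hne : ∀ i, (B i).Nonempty)
    (hdisj : Pairwise (Disjoint on B)) : IsDecompositionOf (univ.sup B) (univ.image B) := by
  refine ⟨?_, ?_, by rw [sup_image]; rfl⟩
  · simp only [mem_image, mem_univ, true_and, forall_exists_index, forall_apply_eq_imp_iff]
    exact hne
  · simp only [coe_image, coe_univ, Set.image_univ]
    rintro _ ⟨i, rfl⟩ _ ⟨j, rfl⟩ hij
    exact hdisj fun h => hij (h ▸ rfl)

theorem sup_univ_filter_subset_eq (hne : ∀ i, (B i).Nonempty) (hdisj : Pairwise (Disjoint on B))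
    {D : Finset (Finset α)} (hD : IsDecompositionOf (univ.sup B) D)
    (hBD : IsRefinementOf (univ.image B) D) {P : Finset α} (hP : P ∈ D) :
    (univ.filter (B · ⊆ P)).sup B = P := by
  conv_rhs => rw [← (isDecompositionOf_image_univ hne hdisj).sup_filter_subset_eq hD hBD hP]
  rw [filter_image, sup_image]
  rfl

def mergeBlocks (B : ι → Finset α) (Q : Finset (Finset ι)) : Finset (Finset α) :=
  Q.image (·.sup B)

variable [DecidableEq ι]

def splitBlocks (B : ι → Finset α) (D : Finset (Finset α)) : Finset (Finset ι) :=
  D.image fun P => univ.filter (B · ⊆ P)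

theorem splitBlocks_mergeBlocks (hne : ∀ i, (B i).Nonempty) (hdisj : Pairwise (Disjoint on B))
    (Q : Finset (Finset ι)) : splitBlocks B (mergeBlocks B Q) = Q := by
  rw [splitBlocks, mergeBlocks, image_image]
  refine (image_congr fun c _ => ?_).trans image_id
  ext i
  simp [subset_sup_iff_mem hne hdisj]

theorem mergeBlocks_splitBlocks (hne : ∀ i, (B i).Nonempty) (hdisj : Pairwise (Disjoint on B))
    {D : Finset (Finset α)} (hD : IsDecompositionOf (univ.sup B) D)
    (hBD : IsRefinementOf (univ.image B) D) : mergeBlocks B (splitBlocks B D) = D := by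
  rw [splitBlocks, mergeBlocks, image_image]
  exact (image_congr fun P hP => sup_univ_filter_subset_eq hne hdisj hD hBD hP).trans image_id

theorem isDecompositionOf_mergeBlocks (hne : ∀ i, (B i).Nonempty)
    (hdisj : Pairwise (Disjoint on B)) {Q : Finset (Finset ι)} (hQ : IsDecompositionOf univ Q) :
    IsDecompositionOf (univ.sup B) (mergeBlocks B Q) := by
  refine ⟨?_, ?_, ?_⟩
  · simp only [mergeBlocks, mem_image, forall_exists_index, and_imp, forall_apply_eq_imp_iff₂]
    intro c hc
    obtain ⟨i, hi⟩ := hQ.1 c hc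
    exact (hne i).mono (le_sup (f := B) hi)
  · simp only [mergeBlocks, coe_image]
    rintro _ ⟨c, hc, rfl⟩ _ ⟨c', hc', rfl⟩ hcc'
    have hdisj_cc' : Disjoint c c' := hQ.2.1 hc hc' fun h => hcc' (h ▸ rfl)
    exact Finset.disjoint_sup_left.2 fun i hi => Finset.disjoint_sup_right.2 fun j hj =>
      hdisj fun hij => disjoint_left.1 hdisj_cc' hi (hij ▸ hj)
  · rw [mergeBlocks, sup_image, ← hQ.2.2, sup_eq_biUnion Q id, sup_biUnion]
    rfl

theorem isRefinementOf_mergeBlocks {Q : Finset (Finset ι)} (hQ : IsDecompositionOf univ Q) :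
    IsRefinementOf (univ.image B) (mergeBlocks B Q) := by
  simp only [IsRefinementOf, mem_image, mem_univ, true_and, forall_exists_index,
    forall_apply_eq_imp_iff]
  intro i
  obtain ⟨c, hc, hi⟩ := hQ.exists_mem (mem_univ i)
  exact ⟨c.sup B, mem_image_of_mem _ hc, le_sup (f := B) hi⟩

theorem isDecompositionOf_splitBlocks (hne : ∀ i, (B i).Nonempty)
    (hdisj : Pairwise (Disjoint on B)) {D : Finset (Finset α)}
    (hD : IsDecompositionOf (univ.sup B) D) (hBD : IsRefinementOf (univ.image B) D) :
    IsDecompositionOf univ (splitBlocks B D) := by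
  refine ⟨?_, ?_, ?_⟩
  · simp only [splitBlocks, mem_image, forall_exists_index, and_imp, forall_apply_eq_imp_iff₂]
    intro P hP
    obtain ⟨v, hv⟩ := hD.1 P hP
    rw [← sup_univ_filter_subset_eq hne hdisj hD hBD hP] at hv
    obtain ⟨i, hi, -⟩ := mem_sup.1 hv
    exact ⟨i, hi⟩
  · simp only [splitBlocks, coe_image]
    rintro _ ⟨P, hP, rfl⟩ _ ⟨P', hP', rfl⟩ hPP'
    refine disjoint_filter.2 fun i _ hiP hiP' => hPP' ?_
    obtain ⟨v, hv⟩ := hne i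
    rw [hD.eq_of_mem_of_mem hP hP' (hiP hv) (hiP' hv)]
  · refine eq_univ_of_forall fun i => ?_
    obtain ⟨P, hP, hiP⟩ := hBD (B i) (mem_image_of_mem B (mem_univ i))
    exact mem_sup.2 ⟨_, mem_image_of_mem _ hP, mem_filter.2 ⟨mem_univ i, hiP⟩⟩

theorem ncard_coarsenings_eq_ncard_decompositions_univ (hne : ∀ i, (B i).Nonempty)
    (hdisj : Pairwise (Disjoint on B)) :
    {D | IsDecompositionOf (univ.sup B) D ∧ IsRefinementOf (univ.image B) D}.ncard =
      {Q : Finset (Finset ι) | IsDecompositionOf univ Q}.ncard := by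
  refine Set.BijOn.ncard_eq (f := splitBlocks B)
    (Set.InvOn.bijOn (f' := mergeBlocks B) ⟨?_, ?_⟩ ?_ ?_)
  · exact fun D ⟨hD, hBD⟩ => mergeBlocks_splitBlocks hne hdisj hD hBD
  · exact fun Q _ => splitBlocks_mergeBlocks hne hdisj Q
  · exact fun D ⟨hD, hBD⟩ => isDecompositionOf_splitBlocks hne hdisj hD hBD
  · exact fun Q hQ => ⟨isDecompositionOf_mergeBlocks hne hdisj hQ, isRefinementOf_mergeBlocks hQ⟩

end Coarsening

theorem card_independent_decompositions_eq_bell_general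
    {V : Type*} [DecidableEq V] [AddCommGroup V] [Module ℝ V]
    (R : Finset V) (F : Finset (Finset V)) (p : ℕ)
    (hF : IsIndependentDecompositionOf R F)
    (hFinest : ¬ ∃ D : Finset (Finset V), IsIndependentDecompositionOf R D ∧
      IsRefinementOf D F ∧ D ≠ F)
    (hp : F.card = p) :
    {D : Finset (Finset V) | IsIndependentDecompositionOf R D}.ncard =
      {Q : Finset (Finset (Fin p)) | IsPartitionOfFin p Q}.ncard := by
  subst hp
  have hmin (E : Finset (Finset V)) (hE : IsIndependentDecompositionOf R E)
      (hEF : IsRefinementOf E F) : E = F :=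
    by_contra fun hEF' => hFinest ⟨E, hE, hEF, hEF'⟩
  have hcoarse : {D | IsIndependentDecompositionOf R D} =
      {D | IsDecompositionOf R D ∧ IsRefinementOf F D} :=
    Set.ext fun D => ⟨fun hD => ⟨hD.1, hF.isRefinementOf_of_minimal hmin hD⟩,
      fun ⟨hD, hFD⟩ => hF.of_isRefinementOf hD hFD⟩
  let B (i : Fin F.card) : Finset V := F.equivFin.symm i
  have hBF : univ.image B = F := by
    ext c
    simp only [mem_image, mem_univ, true_and]
    exact ⟨fun ⟨i, hi⟩ => hi ▸ (F.equivFin.symm i).2,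
      fun hc => ⟨F.equivFin ⟨c, hc⟩, by simp [B]⟩⟩
  have hBR : univ.sup B = R := by
    rw [← hF.1.2.2]
    conv_rhs => rw [← hBF, sup_image]
    rfl
  have hcount := ncard_coarsenings_eq_ncard_decompositions_univ (B := B)
    (fun i => hF.1.1 _ (F.equivFin.symm i).2)
    (fun i j hij => hF.1.2.1 (F.equivFin.symm i).2 (F.equivFin.symm j).2
      fun h => hij (F.equivFin.symm.injective (Subtype.ext h)))
  rw [hBR, hBF] at hcount
  -- `IsPartitionOfFin p` unfolds to `IsDecompositionOf univ`.
  rw [hcoarse, hcount]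
  rfl

/-- If the finest independent decomposition of `R` has exactly `p` blocks, then the number
of independent decompositions of `R` equals the number of partitions of a `p`-element set
(the Bell number `B_p`). -/
theorem card_independent_decompositions_eq_bell
    {V : Type*} [DecidableEq V] [AddCommGroup V] [Module ℝ V] [FiniteDimensional ℝ V]
    (R : Finset V) (hR : ∀ v ∈ R, v ≠ 0) (F : Finset (Finset V)) (p : ℕ)
    (hF : IsIndependentDecompositionOf R F)
    (hFinest : ¬ ∃ D : Finset (Finset V), IsIndependentDecompositionOf R D ∧
      IsRefinementOf D F ∧ D ≠ F)
    (hp : F.card = p) :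
    {D : Finset (Finset V) | IsIndependentDecompositionOf R D}.ncard =
      {Q : Finset (Finset (Fin p)) | IsPartitionOfFin p Q}.ncard :=
  card_independent_decompositions_eq_bell_general R F p hF hFinest hp
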